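/- Let k be an even natural number and G a finite connected simple graph. Let G(k) be the graph obtained from G by subdividing every edge with k new vertices, i.e. G(k) has vertex set V(G) together with k new vertices (e,1),…,(e,k) for each edge e of G, and each edge e = uv of G is replaced by the path u,(e,1),(e,2),…,(e,k),v. Then G(k) is geodetic if and only if G is geodetic. -/

import Mathlib

/-!
A connected graph is geodetic iff, for every target, each vertex has at most one neighbour one step
closer to it. Distances in `G(k)` are explicit: branch vertices are `k + 1` times as far apart as
in `G`, and an inner vertex of an edge `ab` reaches a vertex off that edge through `a` or through
`b`, whichever is shorter. So the neighbours of a branch vertex `u` that descend towards a branch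
vertex `v` in `G(k)` correspond to those in `G`, which proves one direction. For the converse, the
same correspondence holds for inner targets on an edge `a'b'`, because the residues `j + 1` and
`k - j` of the two routes modulo `k + 1` differ when `k` is even. An inner vertex of `ab` has a
unique descent unless its routes via `a` and via `b` tie. A tie makes the difference of the
distances from `a` and `b` to the target odd and smaller than `k + 1`. As `k + 1` is odd, this
forces `a` and `b` to use different ends of `a'b'` with `d(a, a') = d(b, b')`, and unique descent in
`G` then makes both ends equally far from `a` and from `b`, so the difference is `0` after all.
-/

open SimpleGraph

/-- A graph is *geodetic* if it is connected and between any two vertices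
there is exactly one shortest path (geodesic). -/
def IsGeodetic {V : Type*} (G : SimpleGraph V) : Prop :=
  G.Connected ∧ ∀ u v : V, ∃! p : G.Walk u v, p.IsPath ∧ p.length = G.dist u v

/-- The smaller endpoint of an edge (with respect to a linear order on the vertices). -/
def edgeMin {V : Type*} [LinearOrder V] (e : Sym2 V) : V :=
  Sym2.lift ⟨fun a b => min a b, fun _ _ => min_comm _ _⟩ e

/-- The larger endpoint of an edge (with respect to a linear order on the vertices). -/
def edgeMax {V : Type*} [LinearOrder V] (e : Sym2 V) : V :=
  Sym2.lift ⟨fun a b => max a b, fun _ _ => max_comm _ _⟩ e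

/-- The graph `G(k)` obtained from `G` by subdividing every edge with `k` new vertices:
its vertices are the vertices of `G` together with `k` new vertices `(e, 0), …, (e, k-1)`
for every edge `e` of `G`, and every edge `e = uv` of `G` (with `u < v`) is replaced by the
path `u, (e, 0), (e, 1), …, (e, k-1), v`.  (For `k = 0` this is `G` itself.) -/
def subdivision {V : Type*} [LinearOrder V] (G : SimpleGraph V) (k : ℕ) :
    SimpleGraph (V ⊕ (G.edgeSet × Fin k)) :=
  SimpleGraph.fromRel (fun x y =>
    match x, y with
    | Sum.inl u, Sum.inl v => k = 0 ∧ G.Adj u v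
    | Sum.inl u, Sum.inr (e, i) =>
        (i.val = 0 ∧ u = edgeMin e.val) ∨ (i.val = k - 1 ∧ u = edgeMax e.val)
    | Sum.inr _, Sum.inl _ => False
    | Sum.inr (e, i), Sum.inr (e', j) => e = e' ∧ i.val + 1 = j.val)

theorem Nat.eq_and_eq_of_mul_add_eq_mul_add {c x y r s : ℕ} (hr : r < c) (hs : s < c)
    (h : c * x + r = c * y + s) : x = y ∧ r = s := by
  have hc : 0 < c := by omega
  have hx : (c * x + r) / c = x := by rw [Nat.mul_add_div hc, Nat.div_eq_of_lt hr, add_zero]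
  have hy : (c * y + s) / c = y := by rw [Nat.mul_add_div hc, Nat.div_eq_of_lt hs, add_zero]
  obtain rfl : x = y := by rw [← hx, ← hy, h]
  exact ⟨rfl, by omega⟩

theorem Nat.le_of_mul_add_le_mul_add {c x y r s : ℕ} (hs : s < c) (h : c * x + r ≤ c * y + s) :
    x ≤ y := by
  by_contra! hxy
  have : c * (y + 1) ≤ c * x := Nat.mul_le_mul_left c hxy
  rw [mul_add, mul_one] at this
  omega

namespace SimpleGraph

variable {V : Type*} {G : SimpleGraph V}

theorem Adj.dist_le_dist_add_one {u w : V} (h : G.Adj u w) (t : V) :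
    G.dist u t ≤ G.dist w t + 1 := by
  rw [dist_comm, dist_comm (u := w)]
  rcases h.symm.diff_dist_adj (u := t) with h' | h' | h' <;> omega

theorem exists_adj_dist_add_one_eq {u v : V} (h : G.dist u v ≠ 0) :
    ∃ w, G.Adj u w ∧ G.dist w v + 1 = G.dist u v := by
  obtain ⟨p, hp⟩ := exists_walk_of_dist_ne_zero h
  cases p with
  | nil => simp at h
  | @cons _ w _ hadj q =>
    refine ⟨w, hadj, le_antisymm ?_ (hadj.dist_le_dist_add_one v)⟩
    have := dist_le q
    rw [Walk.length_cons] at hp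
    omega

theorem Reachable.le_dist_of_le_add_one {x y : V} (hxy : G.Reachable x y) {f : V → ℕ}
    (hy : f y = 0) (hf : ∀ ⦃x x'⦄, G.Adj x x' → f x ≤ f x' + 1) : f x ≤ G.dist x y := by
  obtain ⟨p, hp⟩ := hxy.exists_walk_length_eq_dist
  rw [← hp]
  clear hp hxy
  induction p with
  | nil => simp [hy]
  | cons h p ih =>
    rw [Walk.length_cons]
    exact (hf h).trans (by have := ih hy; omega)

theorem Walk.length_tail_eq_dist {u w v : V} {h : G.Adj u w} {p : G.Walk w v}
    (hp : (p.cons h).length = G.dist u v) :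
    p.length = G.dist w v ∧ G.dist w v + 1 = G.dist u v := by
  have := dist_le p
  have := h.dist_le_dist_add_one v
  rw [Walk.length_cons] at hp
  omega

def HasUniqueDescent (G : SimpleGraph V) : Prop :=
  ∀ ⦃u v w₁ w₂ : V⦄, G.Adj u w₁ → G.Adj u w₂ →
    G.dist w₁ v + 1 = G.dist u v → G.dist w₂ v + 1 = G.dist u v → w₁ = w₂

theorem HasUniqueDescent.walk_eq (hG : G.HasUniqueDescent) {u v : V} (p q : G.Walk u v)
    (hp : p.length = G.dist u v) (hq : q.length = G.dist u v) : p = q := by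
  induction p with
  | nil =>
    cases q with
    | nil => rfl
    | cons => simp at hq
  | cons h₁ p ih =>
    cases q with
    | nil => simp at hp
    | cons h₂ q =>
      obtain ⟨hp, hd₁⟩ := Walk.length_tail_eq_dist hp
      obtain ⟨hq, hd₂⟩ := Walk.length_tail_eq_dist hq
      obtain rfl := hG h₁ h₂ hd₁ hd₂
      rw [ih q hp hq]

theorem isGeodetic_iff_hasUniqueDescent (hG : G.Connected) :
    IsGeodetic G ↔ G.HasUniqueDescent := by
  refine ⟨fun ⟨_, huniq⟩ u v w₁ w₂ h₁ h₂ hd₁ hd₂ => ?_, fun hud => ⟨hG, fun u v => ?_⟩⟩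
  · have geodesic_cons : ∀ {w} (h : G.Adj u w), G.dist w v + 1 = G.dist u v →
        ∃ r : G.Walk w v, (r.cons h).IsPath ∧ (r.cons h).length = G.dist u v := by
      intro w h hd
      obtain ⟨r, hr⟩ := hG.exists_walk_length_eq_dist w v
      have hlen : (r.cons h).length = G.dist u v := by rw [Walk.length_cons, hr, hd]
      exact ⟨r, (r.cons h).isPath_of_length_eq_dist hlen, hlen⟩
    obtain ⟨r₁, hr₁⟩ := geodesic_cons h₁ hd₁
    obtain ⟨r₂, hr₂⟩ := geodesic_cons h₂ hd₂
    have := (huniq u v).unique hr₁ hr₂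
    exact (Walk.cons.inj this).1
  · obtain ⟨p, hp, hlen⟩ := hG.exists_path_of_dist u v
    exact ⟨p, ⟨hp, hlen⟩, fun q ⟨_, hq⟩ => hud.walk_eq q p hq hlen⟩

/-- Both `a'` and the first step of a geodesic from `b'` to `b` descend from `b'` towards `a`. -/
theorem HasUniqueDescent.dist_add_one_eq (hud : G.HasUniqueDescent) {a b a' b' : V}
    (hab : G.Adj a b) (ha'b' : G.Adj a' b') (h₁ : G.dist a b' = G.dist b b' + 1)
    (h₂ : G.dist a a' = G.dist b b') (hpos : G.dist b b' ≠ 0) :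
    G.dist b a' + 1 = G.dist b b' := by
  rw [dist_comm (u := b)] at hpos ⊢
  obtain ⟨w, hw, hwb⟩ := exists_adj_dist_add_one_eq hpos
  have hwa : G.dist w a + 1 = G.dist b' a := by
    have := hab.dist_le_dist_add_one w
    have := hw.dist_le_dist_add_one a
    rw [dist_comm (u := a), dist_comm (u := b)] at *
    omega
  have ha' : G.dist a' a + 1 = G.dist b' a := by
    rw [dist_comm (u := b'), dist_comm (u := a'), h₁, h₂, dist_comm]
  obtain rfl := hud hw ha'b'.symm hwa ha'
  rw [dist_comm (u := b)]
  exact hwb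

/-- `c * d(x, a') + r` and `c * d(x, b') + s` are the lengths of the two routes from `x` to an
inner vertex of the edge `a'b'`. If `a` prefers `a'` and `b` prefers `b'`, the parity of `c` forces
`d(a, a') = d(b, b')`; unique descent then makes all four distances equal, whence `r = s`. -/
theorem HasUniqueDescent.mul_dist_add_ne (hG : G.Connected) (hud : G.HasUniqueDescent)
    {c r s p q : ℕ} (hc : Odd c) (hrs : r + s = c) (hpq : p + q = c) (hr : 0 < r) (hs : 0 < s)
    {a b a' b' : V} (hab : G.Adj a b) (ha'b' : G.Adj a' b')
    (hne : ¬(a = a' ∧ b = b')) (ha : c * G.dist a a' + r ≤ c * G.dist a b' + s)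
    (hb : c * G.dist b b' + s ≤ c * G.dist b a' + r) :
    c * G.dist a a' + r + p ≠ c * G.dist b b' + s + q := by
  intro h
  obtain ⟨m, hm⟩ := hc
  have haa' := Nat.le_of_mul_add_le_mul_add (by omega) ha
  have hbb' := Nat.le_of_mul_add_le_mul_add (by omega) hb
  have hab' := hab.dist_le_dist_add_one b'
  have hba' := hab.symm.dist_le_dist_add_one a'
  have hD : G.dist a a' = G.dist b b' := by
    rcases lt_trichotomy (G.dist a a') (G.dist b b') with hlt | heq | hgt
    · have : c * G.dist b b' = c * G.dist a a' + c := by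
        rw [show G.dist b b' = G.dist a a' + 1 by omega, mul_add_one]
      omega
    · exact heq
    · have : c * G.dist a a' = c * G.dist b b' + c := by
        rw [show G.dist a a' = G.dist b b' + 1 by omega, mul_add_one]
      omega
  have hpos : G.dist b b' ≠ 0 := fun h0 =>
    hne ⟨hG.dist_eq_zero_iff.mp (hD.trans h0), hG.dist_eq_zero_iff.mp h0⟩
  have hab'_eq : G.dist a b' = G.dist a a' := by
    by_contra hne'
    have := hud.dist_add_one_eq hab ha'b' (by omega) hD hpos
    omega
  have hba'_eq : G.dist b a' = G.dist b b' := by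
    by_contra hne'
    have := hud.dist_add_one_eq hab.symm ha'b'.symm (by omega) hD.symm (by omega)
    omega
  rw [hab'_eq] at ha
  rw [hba'_eq] at hb
  omega

theorem dist_add_one_eq_of_min_add_eq {c r s : ℕ} (hr : r < c) (hs : s < c) (hrs : r ≠ s)
    {u w a b : V} (hw : min (c * G.dist w a + r) (c * G.dist w b + s) + c = c * G.dist u a + r) :
    G.dist w a + 1 = G.dist u a := by
  rcases min_cases (c * G.dist w a + r) (c * G.dist w b + s) with ⟨hmin, -⟩ | ⟨hmin, -⟩ <;>
    rw [hmin] at hw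
  · exact Nat.eq_of_mul_eq_mul_left (show 0 < c by omega) (by rw [mul_add_one]; omega)
  · have := Nat.eq_and_eq_of_mul_add_eq_mul_add hs hr (c := c) (x := G.dist w b + 1)
      (y := G.dist u a) (by rw [mul_add_one]; omega)
    exact absurd this.2.symm hrs

end SimpleGraph

section Subdivision

variable {V : Type*} [LinearOrder V]

@[simp] theorem edgeMin_mk (x y : V) : edgeMin s(x, y) = min x y := rfl

@[simp] theorem edgeMax_mk (x y : V) : edgeMax s(x, y) = max x y := rfl

theorem mk_edgeMin_edgeMax (z : Sym2 V) : s(edgeMin z, edgeMax z) = z := by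
  induction z with
  | h x y => rcases le_total x y with h | h <;> simp [h, Sym2.eq_swap]

theorem edgeMin_le_edgeMax (z : Sym2 V) : edgeMin z ≤ edgeMax z := by
  induction z with
  | h x y => exact min_le_max

variable {G : SimpleGraph V} {k : ℕ}

theorem adj_edgeMin_edgeMax (e : G.edgeSet) : G.Adj (edgeMin e.1) (edgeMax e.1) := by
  rw [← mem_edgeSet, mk_edgeMin_edgeMax]
  exact e.2

theorem subdivision_adj_inl_inl {u v : V} :
    (subdivision G k).Adj (.inl u) (.inl v) ↔ k = 0 ∧ G.Adj u v := by
  rw [subdivision, fromRel_adj]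
  constructor
  · rintro ⟨-, h | h⟩
    · exact h
    · exact ⟨h.1, h.2.symm⟩
  · rintro ⟨hk, h⟩
    exact ⟨by simp [h.ne], Or.inl ⟨hk, h⟩⟩

theorem subdivision_adj_inl_inr {u : V} {e : G.edgeSet} {i : Fin k} :
    (subdivision G k).Adj (.inl u) (.inr (e, i)) ↔
      i.val = 0 ∧ u = edgeMin e.1 ∨ i.val = k - 1 ∧ u = edgeMax e.1 := by
  rw [subdivision, fromRel_adj]
  constructor
  · rintro ⟨-, h | h⟩
    · exact h
    · exact h.elim
  · intro h
    exact ⟨by simp, Or.inl h⟩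

theorem subdivision_adj_inr_inl {u : V} {e : G.edgeSet} {i : Fin k} :
    (subdivision G k).Adj (.inr (e, i)) (.inl u) ↔
      i.val = 0 ∧ u = edgeMin e.1 ∨ i.val = k - 1 ∧ u = edgeMax e.1 := by
  rw [adj_comm]
  exact subdivision_adj_inl_inr

theorem subdivision_adj_inr_inr {e f : G.edgeSet} {i j : Fin k} :
    (subdivision G k).Adj (.inr (e, i)) (.inr (f, j)) ↔
      e = f ∧ (i.val + 1 = j.val ∨ j.val + 1 = i.val) := by
  rw [subdivision, fromRel_adj]
  constructor
  · rintro ⟨-, h | h⟩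
    · exact ⟨h.1, Or.inl h.2⟩
    · exact ⟨h.1.symm, Or.inr h.2⟩
  · rintro ⟨rfl, h | h⟩
    · exact ⟨by simp [Prod.ext_iff, Fin.ext_iff]; omega, Or.inl ⟨rfl, h⟩⟩
    · exact ⟨by simp [Prod.ext_iff, Fin.ext_iff]; omega, Or.inr ⟨rfl, h⟩⟩

/-- The vertex at distance `p` from `edgeMin e` on the path of `subdivision G k` that replaces
`e`; positions beyond `k + 1` are clamped to `edgeMax e`. -/
def onEdge (e : G.edgeSet) (p : ℕ) : V ⊕ (G.edgeSet × Fin k) :=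
  if hp : p = 0 then .inl (edgeMin e.1)
  else if h : p ≤ k then .inr (e, ⟨p - 1, by omega⟩)
  else .inl (edgeMax e.1)

@[simp] theorem onEdge_zero (e : G.edgeSet) : onEdge (k := k) e 0 = .inl (edgeMin e.1) := rfl

theorem onEdge_val_add_one (e : G.edgeSet) (i : Fin k) : onEdge e (i + 1) = .inr (e, i) := by
  simp [onEdge, Nat.succ_le_of_lt i.isLt]

theorem onEdge_of_pos_of_le (e : G.edgeSet) {p : ℕ} (h₀ : 0 < p) (h : p ≤ k) :
    onEdge (k := k) e p = .inr (e, ⟨p - 1, by omega⟩) := by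
  simp [onEdge, h, show p ≠ 0 by omega]

theorem onEdge_of_lt (e : G.edgeSet) {p : ℕ} (h : k < p) :
    onEdge (k := k) e p = .inl (edgeMax e.1) := by
  simp [onEdge, show p ≠ 0 by omega, show ¬p ≤ k by omega]

theorem eq_zero_or_exists_fin_or_eq {p : ℕ} (hp : p ≤ k + 1) :
    p = 0 ∨ (∃ i : Fin k, p = i + 1) ∨ p = k + 1 := by
  rcases Nat.eq_zero_or_pos p with h | h
  · exact .inl h
  · by_cases hpk : p ≤ k
    · exact .inr (.inl ⟨⟨p - 1, by omega⟩, by simp; omega⟩)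
    · exact .inr (.inr (by omega))

theorem adj_onEdge (e : G.edgeSet) {p : ℕ} (hp : p ≤ k) :
    (subdivision G k).Adj (onEdge e p) (onEdge e (p + 1)) := by
  by_cases hpk : p + 1 ≤ k <;> rcases Nat.eq_zero_or_pos p with rfl | hp₀
  · rw [onEdge_zero, onEdge_of_pos_of_le e Nat.zero_lt_one hpk, subdivision_adj_inl_inr]
    exact .inl ⟨rfl, rfl⟩
  · rw [onEdge_of_pos_of_le e hp₀ hp, onEdge_of_pos_of_le e (by omega) hpk,
      subdivision_adj_inr_inr]
    exact ⟨rfl, .inl (by simp; omega)⟩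
  · rw [onEdge_zero, onEdge_of_lt e (by omega), subdivision_adj_inl_inl]
    exact ⟨by omega, adj_edgeMin_edgeMax e⟩
  · rw [onEdge_of_pos_of_le e hp₀ hp, onEdge_of_lt e (by omega), subdivision_adj_inr_inl]
    exact .inr ⟨by simp; omega, rfl⟩

theorem exists_onEdge_of_adj {x y : V ⊕ (G.edgeSet × Fin k)} (h : (subdivision G k).Adj x y) :
    ∃ e p, p ≤ k ∧
      (x = onEdge e p ∧ y = onEdge e (p + 1) ∨ y = onEdge e p ∧ x = onEdge e (p + 1)) := by
  wlog hx : ∃ u, x = .inl u generalizing x y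
  · rcases x with u | ⟨e, i⟩
    · exact absurd ⟨u, rfl⟩ hx
    cases y with
    | inl v =>
      obtain ⟨f, p, hp, hxy⟩ := this h.symm ⟨v, rfl⟩
      exact ⟨f, p, hp, hxy.symm⟩
    | inr y =>
      obtain ⟨f, j⟩ := y
      obtain ⟨rfl, hij | hij⟩ := subdivision_adj_inr_inr.mp h
      · refine ⟨e, i + 1, by omega, .inl ⟨(onEdge_val_add_one e i).symm, ?_⟩⟩
        rw [hij, onEdge_val_add_one]
      · refine ⟨e, j + 1, by omega, .inr ⟨(onEdge_val_add_one e j).symm, ?_⟩⟩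
        rw [hij, onEdge_val_add_one]
  obtain ⟨u, rfl⟩ := hx
  cases y with
  | inl v =>
    obtain ⟨rfl, huv⟩ := subdivision_adj_inl_inl.mp h
    refine ⟨⟨s(u, v), huv⟩, 0, le_rfl, ?_⟩
    rcases huv.ne.lt_or_gt with huv' | huv'
    all_goals rw [onEdge_zero, onEdge_of_lt _ (Nat.lt_succ_self 0)]
    · exact .inl (by simp [huv'.le])
    · exact .inr (by simp [huv'.le])
  | inr y =>
    obtain ⟨e, i⟩ := y
    rcases subdivision_adj_inl_inr.mp h with ⟨hi, rfl⟩ | ⟨hi, rfl⟩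
    · refine ⟨e, 0, Nat.zero_le _, .inl ⟨rfl, ?_⟩⟩
      rw [← onEdge_val_add_one, hi]
    · refine ⟨e, i + 1, i.isLt, .inr ⟨onEdge_val_add_one e i |>.symm, ?_⟩⟩
      rw [onEdge_of_lt e (by omega)]

theorem eq_onEdge_of_adj_inr {e : G.edgeSet} {i : Fin k} {z : V ⊕ (G.edgeSet × Fin k)}
    (h : (subdivision G k).Adj (.inr (e, i)) z) : z = onEdge e i ∨ z = onEdge e (i + 2) := by
  cases z with
  | inl u =>
    rcases subdivision_adj_inr_inl.mp h with ⟨hi, rfl⟩ | ⟨hi, rfl⟩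
    · exact .inl (by rw [hi, onEdge_zero])
    · exact .inr (by rw [onEdge_of_lt e (by omega)])
  | inr z =>
    obtain ⟨f, j⟩ := z
    obtain ⟨rfl, hij | hij⟩ := subdivision_adj_inr_inr.mp h
    · exact .inr (by rw [← onEdge_val_add_one, ← hij])
    · exact .inl (by rw [← onEdge_val_add_one, hij])

variable (G k) in
/-- The distance in `subdivision G k` from the vertex `u` of `G` to `y` (see `dist_subdivision`). -/
noncomputable def distFrom (u : V) : V ⊕ (G.edgeSet × Fin k) → ℕ
  | .inl v => (k + 1) * G.dist u v
  | .inr (f, j) => min ((k + 1) * G.dist u (edgeMin f.1) + (j + 1))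
      ((k + 1) * G.dist u (edgeMax f.1) + (k - j))

open Classical in
variable (G k) in
/-- The distance in `subdivision G k` from `x` to `y` (see `dist_subdivision`). -/
noncomputable def subdivDist : V ⊕ (G.edgeSet × Fin k) → V ⊕ (G.edgeSet × Fin k) → ℕ
  | .inl u, y => distFrom G k u y
  | .inr (e, i), .inl v => min (distFrom G k (edgeMin e.1) (.inl v) + (i + 1))
      (distFrom G k (edgeMax e.1) (.inl v) + (k - i))
  | .inr (e, i), .inr (f, j) => if e = f then Nat.dist i j
      else min (distFrom G k (edgeMin e.1) (.inr (f, j)) + (i + 1))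
        (distFrom G k (edgeMax e.1) (.inr (f, j)) + (k - i))

theorem subdivDist_inr_inr_self (e : G.edgeSet) (i j : Fin k) :
    subdivDist G k (.inr (e, i)) (.inr (e, j)) = Nat.dist i j := by
  simp [subdivDist]

theorem subdivDist_inr_of_ne {e : G.edgeSet} {y : V ⊕ (G.edgeSet × Fin k)}
    (hy : ∀ j, y ≠ .inr (e, j)) (i : Fin k) :
    subdivDist G k (.inr (e, i)) y =
      min (distFrom G k (edgeMin e.1) y + (i + 1)) (distFrom G k (edgeMax e.1) y + (k - i)) := by
  rcases y with v | ⟨f, j⟩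
  · rfl
  · have hef : e ≠ f := by rintro rfl; exact hy j rfl
    simp [subdivDist, hef]

theorem subdivDist_self (x : V ⊕ (G.edgeSet × Fin k)) : subdivDist G k x x = 0 := by
  rcases x with u | ⟨e, i⟩
  · simp [subdivDist, distFrom]
  · rw [subdivDist_inr_inr_self, Nat.dist_self]

theorem distFrom_edgeMin_inr (e : G.edgeSet) (j : Fin k) :
    distFrom G k (edgeMin e.1) (.inr (e, j)) = j + 1 := by
  rw [distFrom, dist_self, dist_eq_one_iff_adj.mpr (adj_edgeMin_edgeMax e)]
  omega

theorem distFrom_edgeMax_inr (e : G.edgeSet) (j : Fin k) :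
    distFrom G k (edgeMax e.1) (.inr (e, j)) = k - j := by
  rw [distFrom, dist_self, dist_eq_one_iff_adj.mpr (adj_edgeMin_edgeMax e).symm]
  omega

theorem distFrom_le_of_adj {u w : V} (h : G.Adj u w) (y : V ⊕ (G.edgeSet × Fin k)) :
    distFrom G k u y ≤ distFrom G k w y + (k + 1) := by
  have scaled : ∀ t, (k + 1) * G.dist u t ≤ (k + 1) * G.dist w t + (k + 1) := fun t => by
    rw [← mul_add_one]
    exact Nat.mul_le_mul_left _ (h.dist_le_dist_add_one t)
  rcases y with v | ⟨f, j⟩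
  · exact scaled v
  · have := scaled (edgeMin f.1)
    have := scaled (edgeMax f.1)
    simp only [distFrom]
    omega

theorem subdivDist_onEdge_of_ne {e : G.edgeSet} {y : V ⊕ (G.edgeSet × Fin k)}
    (hy : ∀ j, y ≠ .inr (e, j)) {p : ℕ} (hp : p ≤ k + 1) :
    subdivDist G k (onEdge e p) y =
      min (distFrom G k (edgeMin e.1) y + p) (distFrom G k (edgeMax e.1) y + (k + 1 - p)) := by
  have hab := distFrom_le_of_adj (adj_edgeMin_edgeMax e) y
  have hba := distFrom_le_of_adj (adj_edgeMin_edgeMax e).symm y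
  rcases eq_zero_or_exists_fin_or_eq hp with rfl | ⟨i, rfl⟩ | rfl
  · rw [onEdge_zero, subdivDist]
    omega
  · rw [onEdge_val_add_one, subdivDist_inr_of_ne hy]
    omega
  · rw [onEdge_of_lt e (Nat.lt_succ_self k), subdivDist]
    omega

theorem subdivDist_onEdge_inr (e : G.edgeSet) {p : ℕ} (hp : p ≤ k + 1) (j : Fin k) :
    subdivDist G k (onEdge e p) (.inr (e, j)) = Nat.dist p (j + 1) := by
  have hj := j.isLt
  rcases eq_zero_or_exists_fin_or_eq hp with rfl | ⟨i, rfl⟩ | rfl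
  · rw [onEdge_zero, subdivDist, distFrom_edgeMin_inr, Nat.dist_comm, Nat.dist_zero_right]
  · rw [onEdge_val_add_one, subdivDist_inr_inr_self, Nat.dist_add_add_right]
  · rw [onEdge_of_lt e (Nat.lt_succ_self k), subdivDist, distFrom_edgeMax_inr]
    unfold Nat.dist
    omega

theorem subdivDist_onEdge_succ (e : G.edgeSet) {p : ℕ} (hp : p ≤ k)
    (y : V ⊕ (G.edgeSet × Fin k)) :
    subdivDist G k (onEdge e p) y ≤ subdivDist G k (onEdge e (p + 1)) y + 1 ∧
      subdivDist G k (onEdge e (p + 1)) y ≤ subdivDist G k (onEdge e p) y + 1 := by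
  by_cases hy : ∃ j, y = .inr (e, j)
  · obtain ⟨j, rfl⟩ := hy
    rw [subdivDist_onEdge_inr e (by omega), subdivDist_onEdge_inr e (by omega)]
    unfold Nat.dist
    omega
  · push Not at hy
    rw [subdivDist_onEdge_of_ne hy (by omega), subdivDist_onEdge_of_ne hy (by omega)]
    omega

theorem subdivDist_le_of_adj {x x' : V ⊕ (G.edgeSet × Fin k)} (h : (subdivision G k).Adj x x')
    (y : V ⊕ (G.edgeSet × Fin k)) : subdivDist G k x y ≤ subdivDist G k x' y + 1 := by
  obtain ⟨e, p, hp, ⟨rfl, rfl⟩ | ⟨rfl, rfl⟩⟩ := exists_onEdge_of_adj h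
  · exact (subdivDist_onEdge_succ e hp y).1
  · exact (subdivDist_onEdge_succ e hp y).2

theorem reachable_onEdge_zero (e : G.edgeSet) (p : ℕ) :
    (subdivision G k).Reachable (onEdge e 0) (onEdge e p) := by
  induction p with
  | zero => rfl
  | succ p ih =>
    by_cases hp : p ≤ k
    · exact ih.trans (adj_onEdge e hp).reachable
    · rwa [onEdge_of_lt e (show k < p + 1 by omega), ← onEdge_of_lt e (show k < p by omega)]

theorem subdivision_reachable_inl {u v : V} (h : G.Reachable u v) :
    (subdivision G k).Reachable (.inl u) (.inl v) := by
  obtain ⟨p⟩ := h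
  induction p with
  | nil => rfl
  | @cons u w _ h p ih =>
    refine .trans ?_ ih
    have := reachable_onEdge_zero (k := k) ⟨s(u, w), h⟩ (k + 1)
    rw [onEdge_zero, onEdge_of_lt _ (Nat.lt_succ_self k)] at this
    rcases h.ne.lt_or_gt with huw | huw
    · simpa [huw.le] using this
    · simpa [huw.le] using this.symm

theorem subdivision_connected (hG : G.Connected) : (subdivision G k).Connected := by
  have reachable_from_inl : ∀ x, ∃ u, (subdivision G k).Reachable (.inl u) x := by
    rintro (u | ⟨e, i⟩)
    · exact ⟨u, .rfl⟩
    · exact ⟨edgeMin e.1, by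
        simpa [onEdge_val_add_one] using reachable_onEdge_zero (k := k) e (i + 1)⟩
  refine (connected_iff _).mpr ⟨fun x y => ?_, ⟨.inl hG.nonempty.some⟩⟩
  obtain ⟨u, hu⟩ := reachable_from_inl x
  obtain ⟨v, hv⟩ := reachable_from_inl y
  exact hu.symm.trans ((subdivision_reachable_inl (hG.preconnected u v)).trans hv)

section Connected

variable (hG : G.Connected)
include hG

theorem dist_onEdge_le (e : G.edgeSet) (p q : ℕ) :
    (subdivision G k).dist (onEdge e p) (onEdge e q) ≤ Nat.dist p q := by
  have hH := subdivision_connected (k := k) hG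
  have step : ∀ p, (subdivision G k).dist (onEdge e p) (onEdge e (p + 1)) ≤ 1 := fun p => by
    by_cases hp : p ≤ k
    · exact (dist_eq_one_iff_adj.mpr (adj_onEdge e hp)).le
    · rw [onEdge_of_lt e (show k < p by omega), onEdge_of_lt e (show k < p + 1 by omega),
        dist_self]
      exact zero_le_one
  have forward : ∀ p d, (subdivision G k).dist (onEdge e p) (onEdge e (p + d)) ≤ d := by
    intro p d
    induction d with
    | zero => simp
    | succ d ih =>
      have := step (p + d)
      rw [← add_assoc]
      exact (hH.dist_triangle (v := onEdge e (p + d))).trans (by omega)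
  rcases le_total p q with h | h
  · obtain ⟨d, rfl⟩ := Nat.exists_eq_add_of_le h
    simpa [Nat.dist_eq_sub_of_le h] using forward p d
  · obtain ⟨d, rfl⟩ := Nat.exists_eq_add_of_le h
    rw [SimpleGraph.dist_comm, Nat.dist_comm]
    simpa [Nat.dist_eq_sub_of_le h] using forward q d

theorem dist_inl_le (u v : V) :
    (subdivision G k).dist (.inl u) (.inl v) ≤ (k + 1) * G.dist u v := by
  have hH := subdivision_connected (k := k) hG
  obtain ⟨p, hp⟩ := hG.exists_walk_length_eq_dist u v
  rw [← hp]
  clear hp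
  induction p with
  | nil => simp
  | @cons u w _ h p ih =>
    have hedge := dist_onEdge_le (k := k) hG ⟨s(u, w), h⟩ 0 (k + 1)
    rw [onEdge_zero, onEdge_of_lt _ (Nat.lt_succ_self k), Nat.dist_zero_left] at hedge
    have hedge' : (subdivision G k).dist (.inl u) (.inl w) ≤ k + 1 := by
      rcases h.ne.lt_or_gt with huw | huw
      · simpa [huw.le] using hedge
      · simpa [huw.le, dist_comm] using hedge
    rw [Walk.length_cons, mul_add_one]
    exact (hH.dist_triangle (v := .inl w)).trans (by omega)

theorem dist_inl_le_distFrom (u : V) (y : V ⊕ (G.edgeSet × Fin k)) :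
    (subdivision G k).dist (.inl u) y ≤ distFrom G k u y := by
  have hH := subdivision_connected (k := k) hG
  rcases y with v | ⟨f, j⟩
  · exact dist_inl_le hG u v
  · have hj := j.isLt
    have hmin := dist_onEdge_le (k := k) hG f 0 (j + 1)
    have hmax := dist_onEdge_le (k := k) hG f (k + 1) (j + 1)
    rw [onEdge_zero, onEdge_val_add_one, Nat.dist_zero_left] at hmin
    rw [onEdge_of_lt _ (Nat.lt_succ_self k), onEdge_val_add_one, Nat.dist_comm,
      Nat.dist_eq_sub_of_le (by omega)] at hmax
    refine le_min ?_ ?_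
    · have := dist_inl_le (k := k) hG u (edgeMin f.1)
      exact (hH.dist_triangle (v := .inl (edgeMin f.1))).trans (by omega)
    · have := dist_inl_le (k := k) hG u (edgeMax f.1)
      exact (hH.dist_triangle (v := .inl (edgeMax f.1))).trans (by omega)

theorem dist_le_subdivDist (x y : V ⊕ (G.edgeSet × Fin k)) :
    (subdivision G k).dist x y ≤ subdivDist G k x y := by
  have hH := subdivision_connected (k := k) hG
  rcases x with u | ⟨e, i⟩
  · exact dist_inl_le_distFrom hG u y
  by_cases hy : ∃ j, y = .inr (e, j)
  · obtain ⟨j, rfl⟩ := hy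
    rw [subdivDist_inr_inr_self, ← onEdge_val_add_one, ← onEdge_val_add_one,
      ← Nat.dist_add_add_right]
    exact dist_onEdge_le hG e _ _
  push Not at hy
  have hi := i.isLt
  have hmin := dist_onEdge_le (k := k) hG e (i + 1) 0
  have hmax := dist_onEdge_le (k := k) hG e (i + 1) (k + 1)
  rw [onEdge_zero, onEdge_val_add_one, Nat.dist_zero_right] at hmin
  rw [onEdge_of_lt _ (Nat.lt_succ_self k), onEdge_val_add_one,
    Nat.dist_eq_sub_of_le (by omega)] at hmax
  rw [subdivDist_inr_of_ne hy]
  refine le_min ?_ ?_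
  · have := dist_inl_le_distFrom hG (edgeMin e.1) y
    exact (hH.dist_triangle (v := .inl (edgeMin e.1))).trans (by omega)
  · have := dist_inl_le_distFrom hG (edgeMax e.1) y
    exact (hH.dist_triangle (v := .inl (edgeMax e.1))).trans (by omega)

theorem dist_subdivision (x y : V ⊕ (G.edgeSet × Fin k)) :
    (subdivision G k).dist x y = subdivDist G k x y :=
  le_antisymm (dist_le_subdivDist hG x y)
    (((subdivision_connected hG).preconnected x y).le_dist_of_le_add_one (f := (subdivDist G k · y))
      (subdivDist_self y)
      fun _ _ h => subdivDist_le_of_adj h y)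

end Connected

/-- The neighbour of `u` on the path of `subdivision G k` that replaces the edge `uw`. -/
def firstStep {u w : V} (h : G.Adj u w) : V ⊕ (G.edgeSet × Fin k) :=
  onEdge ⟨s(u, w), h⟩ (if u < w then 1 else k)

theorem adj_firstStep {u w : V} (h : G.Adj u w) :
    (subdivision G k).Adj (.inl u) (firstStep h) := by
  rcases h.ne.lt_or_gt with huw | huw
  · have := adj_onEdge (k := k) ⟨s(u, w), h⟩ (Nat.zero_le k)
    simpa [firstStep, huw, huw.le] using this
  · have := adj_onEdge (k := k) ⟨s(u, w), h⟩ le_rfl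
    rw [onEdge_of_lt _ (Nat.lt_succ_self k)] at this
    simpa [firstStep, huw.not_gt, huw.le] using this.symm

theorem firstStep_eq_inl {u w : V} (h : G.Adj u w) : firstStep (k := 0) h = .inl w := by
  rcases h.ne.lt_or_gt with huw | huw
  · simp [firstStep, huw, huw.le, onEdge_of_lt _ zero_lt_one]
  · simp [firstStep, huw.not_gt, huw.le]

theorem exists_firstStep_eq_inr (hk : 0 < k) {u w : V} (h : G.Adj u w) :
    ∃ i, firstStep (k := k) h = .inr (⟨s(u, w), h⟩, i) :=
  ⟨_, onEdge_of_pos_of_le (p := if u < w then 1 else k) _ (by split_ifs <;> omega)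
    (by split_ifs <;> omega)⟩

theorem exists_firstStep_of_adj {u : V} {z : V ⊕ (G.edgeSet × Fin k)}
    (hz : (subdivision G k).Adj (.inl u) z) : ∃ w, ∃ h : G.Adj u w, z = firstStep h := by
  rcases z with w | ⟨e, i⟩
  · obtain ⟨rfl, h⟩ := subdivision_adj_inl_inl.mp hz
    exact ⟨w, h, (firstStep_eq_inl h).symm⟩
  · have hab := adj_edgeMin_edgeMax e
    rcases subdivision_adj_inl_inr.mp hz with ⟨hi, rfl⟩ | ⟨hi, rfl⟩
    · refine ⟨edgeMax e.1, hab, ?_⟩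
      have he : (⟨s(edgeMin e.1, edgeMax e.1), hab⟩ : G.edgeSet) = e :=
        Subtype.ext (mk_edgeMin_edgeMax e.1)
      rw [firstStep, if_pos ((edgeMin_le_edgeMax e.1).lt_of_ne hab.ne), he,
        show 1 = (i : ℕ) + 1 by omega, onEdge_val_add_one]
    · refine ⟨edgeMin e.1, hab.symm, ?_⟩
      have he : (⟨s(edgeMax e.1, edgeMin e.1), hab.symm⟩ : G.edgeSet) = e :=
        Subtype.ext (Sym2.eq_swap.trans (mk_edgeMin_edgeMax e.1))
      rw [firstStep, if_neg ((edgeMin_le_edgeMax e.1).lt_of_ne hab.ne).not_gt, he,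
        ← onEdge_val_add_one e i]
      congr 1
      omega

theorem firstStep_injective {u w₁ w₂ : V} {h₁ : G.Adj u w₁} {h₂ : G.Adj u w₂}
    (h : firstStep (k := k) h₁ = firstStep h₂) : w₁ = w₂ := by
  rcases Nat.eq_zero_or_pos k with rfl | hk
  · rw [firstStep_eq_inl, firstStep_eq_inl] at h
    exact Sum.inl.inj h
  · obtain ⟨i₁, hi₁⟩ := exists_firstStep_eq_inr hk h₁
    obtain ⟨i₂, hi₂⟩ := exists_firstStep_eq_inr hk h₂
    rw [hi₁, hi₂, Sum.inr.injEq, Prod.mk.injEq] at h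
    exact Sym2.congr_right.mp (congrArg Subtype.val h.1)

theorem subdivDist_firstStep {u w : V} (h : G.Adj u w) {y : V ⊕ (G.edgeSet × Fin k)}
    (hy : ∀ j, y ≠ .inr (⟨s(u, w), h⟩, j)) :
    subdivDist G k (firstStep h) y = min (distFrom G k u y + 1) (distFrom G k w y + k) := by
  rw [firstStep, subdivDist_onEdge_of_ne hy (by split_ifs <;> omega)]
  rcases h.ne.lt_or_gt with huw | huw
  · simp [huw, huw.le]
  · simp only [huw.not_gt, if_false, edgeMin_mk, edgeMax_mk, min_eq_right huw.le,
      max_eq_left huw.le]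
    rw [min_comm]
    congr 2
    omega

theorem distFrom_inr_mk_le {u w : V} (h : G.Adj u w) (j : Fin k) :
    distFrom G k u (.inr (⟨s(u, w), h⟩, j)) ≤ k := by
  rcases h.ne.lt_or_gt with huw | huw
  · have := distFrom_edgeMin_inr (⟨s(u, w), h⟩ : G.edgeSet) j
    simp only [edgeMin_mk, min_eq_left huw.le] at this
    omega
  · have := distFrom_edgeMax_inr (⟨s(u, w), h⟩ : G.edgeSet) j
    simp only [edgeMax_mk, max_eq_left huw.le] at this
    omega

theorem exists_firstStep_of_descent {u : V} {y z : V ⊕ (G.edgeSet × Fin k)}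
    (hz : (subdivision G k).Adj (.inl u) z) (hd : subdivDist G k z y + 1 = distFrom G k u y) :
    ∃ w, ∃ h : G.Adj u w, z = firstStep h ∧
      ((∃ j, y = .inr (⟨s(u, w), h⟩, j)) ∧ distFrom G k u y ≤ k ∨
        distFrom G k w y + (k + 1) = distFrom G k u y) := by
  obtain ⟨w, h, rfl⟩ := exists_firstStep_of_adj hz
  refine ⟨w, h, rfl, ?_⟩
  by_cases hy : ∃ j, y = .inr (⟨s(u, w), h⟩, j)
  · obtain ⟨j, rfl⟩ := hy
    exact .inl ⟨⟨j, rfl⟩, distFrom_inr_mk_le h j⟩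
  · push Not at hy
    rw [subdivDist_firstStep h hy] at hd
    exact .inr (by omega)

namespace SimpleGraph.HasUniqueDescent

variable (hud : G.HasUniqueDescent) (hk : Even k)
include hud hk

theorem eq_of_distFrom_add_eq {u w₁ w₂ : V} {y : V ⊕ (G.edgeSet × Fin k)}
    (h₁ : G.Adj u w₁) (h₂ : G.Adj u w₂)
    (hw₁ : distFrom G k w₁ y + (k + 1) = distFrom G k u y)
    (hw₂ : distFrom G k w₂ y + (k + 1) = distFrom G k u y) : w₁ = w₂ := by
  rcases y with v | ⟨f, j⟩
  · refine hud (v := v) h₁ h₂ ?_ ?_ <;>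
      refine Nat.eq_of_mul_eq_mul_left k.succ_pos ?_ <;>
      simpa only [distFrom, mul_add_one]
  · have hj := j.isLt
    have hrs : (j : ℕ) + 1 ≠ k - j := by obtain ⟨m, rfl⟩ := hk; omega
    simp only [distFrom] at hw₁ hw₂
    rcases le_total ((k + 1) * G.dist u (edgeMin f.1) + (j + 1))
      ((k + 1) * G.dist u (edgeMax f.1) + (k - j)) with hu | hu
    · rw [min_eq_left hu] at hw₁ hw₂
      exact hud h₁ h₂ (dist_add_one_eq_of_min_add_eq (by omega) (by omega) hrs hw₁)
        (dist_add_one_eq_of_min_add_eq (by omega) (by omega) hrs hw₂)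
    · rw [min_eq_right hu, min_comm] at hw₁ hw₂
      exact hud h₁ h₂ (dist_add_one_eq_of_min_add_eq (by omega) (by omega) hrs.symm hw₁)
        (dist_add_one_eq_of_min_add_eq (by omega) (by omega) hrs.symm hw₂)

theorem eq_of_descent_inl {u : V} {y z₁ z₂ : V ⊕ (G.edgeSet × Fin k)}
    (h₁ : (subdivision G k).Adj (.inl u) z₁) (h₂ : (subdivision G k).Adj (.inl u) z₂)
    (hd₁ : subdivDist G k z₁ y + 1 = distFrom G k u y)
    (hd₂ : subdivDist G k z₂ y + 1 = distFrom G k u y) : z₁ = z₂ := by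
  obtain ⟨w₁, hw₁, rfl, hy₁⟩ := exists_firstStep_of_descent h₁ hd₁
  obtain ⟨w₂, hw₂, rfl, hy₂⟩ := exists_firstStep_of_descent h₂ hd₂
  obtain rfl : w₁ = w₂ := by
    rcases hy₁ with ⟨⟨j₁, rfl⟩, hle₁⟩ | hy₁ <;> rcases hy₂ with ⟨⟨j₂, hj⟩, hle₂⟩ | hy₂
    · rw [Sum.inr.injEq, Prod.mk.injEq] at hj
      exact Sym2.congr_right.mp (congrArg Subtype.val hj.1)
    · omega
    · omega
    · exact hud.eq_of_distFrom_add_eq hk hw₁ hw₂ hy₁ hy₂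
  rfl

/-- An inner vertex of `e` has no two equally short routes to `y`, one through each end of `e`. -/
theorem distFrom_add_ne (hG : G.Connected) {e : G.edgeSet} {y : V ⊕ (G.edgeSet × Fin k)}
    (hy : ∀ j, y ≠ .inr (e, j)) {p q : ℕ} (hp : 0 < p) (hq : 0 < q) (hpq : p + q = k + 1) :
    distFrom G k (edgeMin e.1) y + p ≠ distFrom G k (edgeMax e.1) y + q := by
  obtain ⟨m, hm⟩ := hk
  have same_branch : ∀ x y, (k + 1) * x + p ≠ (k + 1) * y + q := fun x y h => by
    have := Nat.eq_and_eq_of_mul_add_eq_mul_add (show p < k + 1 by omega)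
      (show q < k + 1 by omega) h
    omega
  rcases y with v | ⟨f, j⟩
  · exact same_branch _ _
  have hj := j.isLt
  have hef : e.1 ≠ f.1 := fun h => hy j (by rw [Subtype.ext h])
  have hne : ¬(edgeMin e.1 = edgeMin f.1 ∧ edgeMax e.1 = edgeMax f.1) := fun ⟨h₁, h₂⟩ =>
    hef (by rw [← mk_edgeMin_edgeMax e.1, ← mk_edgeMin_edgeMax f.1, h₁, h₂])
  have hne' : ¬(edgeMin e.1 = edgeMax f.1 ∧ edgeMax e.1 = edgeMin f.1) := fun ⟨h₁, h₂⟩ =>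
    hef (by rw [← mk_edgeMin_edgeMax e.1, ← mk_edgeMin_edgeMax f.1, h₁, h₂, Sym2.eq_swap])
  have hab := adj_edgeMin_edgeMax e
  have hf := adj_edgeMin_edgeMax f
  have hc : Odd (k + 1) := ⟨m, by omega⟩
  simp only [distFrom]
  set a := edgeMin e.1
  set b := edgeMax e.1
  set a' := edgeMin f.1
  set b' := edgeMax f.1
  rcases min_cases ((k + 1) * G.dist a a' + (j + 1)) ((k + 1) * G.dist a b' + (k - j))
    with ⟨ha, ha'⟩ | ⟨ha, ha'⟩ <;>
  rcases min_cases ((k + 1) * G.dist b a' + (j + 1)) ((k + 1) * G.dist b b' + (k - j))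
    with ⟨hb, hb'⟩ | ⟨hb, hb'⟩ <;>
  rw [ha, hb] <;> intro h
  · exact same_branch (G.dist a a') (G.dist b a') (by omega)
  · exact hud.mul_dist_add_ne hG hc (r := j + 1) (s := k - j) (by omega) hpq (by omega)
      (by omega) hab hf hne ha' hb'.le h
  · exact hud.mul_dist_add_ne hG hc (r := k - j) (s := j + 1) (by omega) hpq (by omega)
      (by omega) hab hf.symm hne' ha'.le hb' (by omega)
  · exact same_branch (G.dist a b') (G.dist b b') (by omega)

theorem eq_of_descent_inr (hG : G.Connected) {e : G.edgeSet} {i : Fin k}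
    {y z₁ z₂ : V ⊕ (G.edgeSet × Fin k)}
    (h₁ : (subdivision G k).Adj (.inr (e, i)) z₁) (h₂ : (subdivision G k).Adj (.inr (e, i)) z₂)
    (hd₁ : subdivDist G k z₁ y + 1 = subdivDist G k (.inr (e, i)) y)
    (hd₂ : subdivDist G k z₂ y + 1 = subdivDist G k (.inr (e, i)) y) : z₁ = z₂ := by
  have hi := i.isLt
  have not_both : ¬(subdivDist G k (onEdge e i) y + 1 = subdivDist G k (onEdge e (i + 1)) y ∧
      subdivDist G k (onEdge e (i + 2)) y + 1 = subdivDist G k (onEdge e (i + 1)) y) := by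
    by_cases hy : ∃ j, y = .inr (e, j)
    · obtain ⟨j, rfl⟩ := hy
      simp only [subdivDist_onEdge_inr e (show (i : ℕ) ≤ k + 1 by omega),
        subdivDist_onEdge_inr e (show (i : ℕ) + 1 ≤ k + 1 by omega),
        subdivDist_onEdge_inr e (show (i : ℕ) + 2 ≤ k + 1 by omega)]
      unfold Nat.dist
      omega
    · push Not at hy
      simp only [subdivDist_onEdge_of_ne hy (show (i : ℕ) ≤ k + 1 by omega),
        subdivDist_onEdge_of_ne hy (show (i : ℕ) + 1 ≤ k + 1 by omega),
        subdivDist_onEdge_of_ne hy (show (i : ℕ) + 2 ≤ k + 1 by omega)]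
      have := hud.distFrom_add_ne hk hG hy (p := i + 1) (q := k - i) (by omega) (by omega)
        (by omega)
      omega
  rw [← onEdge_val_add_one] at hd₁ hd₂
  rcases eq_onEdge_of_adj_inr h₁ with rfl | rfl <;> rcases eq_onEdge_of_adj_inr h₂ with rfl | rfl
  · rfl
  · exact absurd ⟨hd₁, hd₂⟩ not_both
  · exact absurd ⟨hd₂, hd₁⟩ not_both
  · rfl

end SimpleGraph.HasUniqueDescent

theorem hasUniqueDescent_subdivision (hG : G.Connected) (hud : G.HasUniqueDescent)
    (hk : Even k) : (subdivision G k).HasUniqueDescent := by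
  intro x y z₁ z₂ h₁ h₂ hd₁ hd₂
  rw [dist_subdivision hG, dist_subdivision hG] at hd₁ hd₂
  rcases x with u | ⟨e, i⟩
  · exact hud.eq_of_descent_inl hk h₁ h₂ hd₁ hd₂
  · exact hud.eq_of_descent_inr hk hG h₁ h₂ hd₁ hd₂

theorem hasUniqueDescent_of_subdivision (hG : G.Connected)
    (hud : (subdivision G k).HasUniqueDescent) : G.HasUniqueDescent := by
  intro u v w₁ w₂ h₁ h₂ hd₁ hd₂
  have descent : ∀ {w} (h : G.Adj u w), G.dist w v + 1 = G.dist u v →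
      (subdivision G k).dist (firstStep h) (.inl v) + 1 =
        (subdivision G k).dist (.inl u) (.inl v) := by
    intro w h hd
    rw [dist_subdivision hG, dist_subdivision hG, subdivDist_firstStep h (by simp)]
    have : (k + 1) * G.dist u v = (k + 1) * G.dist w v + (k + 1) := by rw [← hd, mul_add_one]
    simp only [subdivDist, distFrom]
    omega
  exact firstStep_injective (hud (adj_firstStep h₁) (adj_firstStep h₂) (descent h₁ hd₁)
    (descent h₂ hd₂))

end Subdivision

theorem stmt_4_general {V : Type*} [LinearOrder V] (G : SimpleGraph V)
    (hconn : G.Connected) (k : ℕ) (hk : Even k) :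
    IsGeodetic (subdivision G k) ↔ IsGeodetic G := by
  rw [isGeodetic_iff_hasUniqueDescent (subdivision_connected hconn),
    isGeodetic_iff_hasUniqueDescent hconn]
  exact ⟨hasUniqueDescent_of_subdivision hconn,
    fun hud => hasUniqueDescent_subdivision hconn hud hk⟩

/-- For an even natural number `k` and a finite connected graph `G`, the subdivision `G(k)`
is geodetic if and only if `G` is geodetic. -/
theorem stmt_4 {V : Type*} [Fintype V] [LinearOrder V] (G : SimpleGraph V)
    (hconn : G.Connected) (k : ℕ) (hk : Even k) :
    IsGeodetic (subdivision G k) ↔ IsGeodetic G :=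
  stmt_4_general G hconn k hk
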